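/- Let N ≥ 2, let x lie in the interior of C_N^D with x_N = 0, and let φ : [0,∞) → ℝ^N be a continuously differentiable function taking values in the interior of C_N^D with φ(0) = x that solves the ODE of type D_N. Then φ_N(t) = 0 for all t ≥ 0, and the first N−1 components (φ_1,…,φ_{N−1}) take values in the interior of C_{N−1}^B, start at (x_1,…,x_{N−1}), and solve the ODE of type B_{N−1} with parameter ν = 2. -/

import Mathlib

open scoped BigOperators

noncomputable section

/-- The interior of the closed Weyl chamber of type D. -/
def interiorD {N : ℕ} (x : Fin N → ℝ) : Prop :=
  StrictAnti (fun j : Fin N => if (j : ℕ) = N - 1 then |x j| else x j)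

/-- `φ` solves the ODE of type `D_N` on `[0,∞)`. -/
def solvesD {N : ℕ} (φ : ℝ → Fin N → ℝ) : Prop :=
  ∀ t ∈ Set.Ici (0:ℝ), ∀ i : Fin N,
    HasDerivWithinAt (fun s => φ s i)
      (∑ j ∈ Finset.univ.erase i,
        (1 / (φ t i - φ t j) + 1 / (φ t i + φ t j)))
      (Set.Ici 0) t

/-- The interior of the closed Weyl chamber of type B. -/
def interiorB {N : ℕ} (x : Fin N → ℝ) : Prop := StrictAnti x ∧ ∀ i, 0 < x i

/-- `φ` solves the ODE of type `B_N` with parameter `ν` on `[0,∞)`. -/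
def solvesB {N : ℕ} (ν : ℝ) (φ : ℝ → Fin N → ℝ) : Prop :=
  ∀ t ∈ Set.Ici (0:ℝ), ∀ i : Fin N,
    HasDerivWithinAt (fun s => φ s i)
      ((∑ j ∈ Finset.univ.erase i,
          (1 / (φ t i - φ t j) + 1 / (φ t i + φ t j))) + ν / φ t i)
      (Set.Ici 0) t

/-!
Since `|φ_N| < φ_j` for `j < N` inside the chamber, each summand of
`φ_N · φ_N' = ∑_j φ_N (1/(φ_N - φ_j) + 1/(φ_N + φ_j)) = ∑_j 2 φ_N² / (φ_N² - φ_j²)` is `≤ 0`.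
Hence `φ_N²` is antitone on `[0,∞)`, and it starts at `0`, so `φ_N ≡ 0`. With `φ_N = 0` the
`j = N` term of the type-`D` sum for `φ_i` is `1/φ_i + 1/φ_i = 2/φ_i`, the type-`B` drift with
`ν = 2`, and the chamber conditions reduce to those of type `B`.
-/

open Finset

theorem abs_lt_of_interiorD {N : ℕ} (hN : N - 1 < N) {y : Fin N → ℝ} (hy : interiorD y)
    {j : Fin N} (hj : (j : ℕ) ≠ N - 1) : |y ⟨N - 1, hN⟩| < y j := by
  have hjL : j < ⟨N - 1, hN⟩ := Fin.lt_def.2 (by simp only; omega)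
  simpa [hj] using hy hjL

theorem interiorB_castLE_of_interiorD {N : ℕ} {y : Fin N → ℝ} (hy : interiorD y) :
    interiorB (fun i : Fin (N - 1) => y (Fin.castLE (Nat.sub_le N 1) i)) := by
  have hne : ∀ i : Fin (N - 1), (i : ℕ) ≠ N - 1 := fun i => i.isLt.ne
  refine ⟨fun i j hij => ?_, fun i => ?_⟩
  · simpa [hne] using hy ((Fin.castLE_lt_castLE_iff _).2 hij)
  · have hN : N - 1 < N := by have := i.isLt; omega
    exact (abs_nonneg _).trans_lt (abs_lt_of_interiorD hN hy (hne i))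

theorem mul_one_div_sub_add_one_div_add_nonpos {a c : ℝ} (h : |a| < c) :
    a * (1 / (a - c) + 1 / (a + c)) ≤ 0 := by
  have hsub : a - c < 0 := by linarith [le_abs_self a]
  have hadd : 0 < a + c := by linarith [neg_abs_le a]
  have heq : a * (1 / (a - c) + 1 / (a + c)) = 2 * a ^ 2 / ((a - c) * (a + c)) := by
    field_simp [hsub.ne, hadd.ne']
    ring
  rw [heq]
  exact div_nonpos_of_nonneg_of_nonpos (by positivity) (mul_neg_of_neg_of_pos hsub hadd).le

theorem last_eq_zero_of_solvesD {N : ℕ} (hN : N - 1 < N) {φ : ℝ → Fin N → ℝ}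
    (hint : ∀ t ∈ Set.Ici (0:ℝ), interiorD (φ t)) (hode : solvesD φ)
    (h0 : φ 0 ⟨N - 1, hN⟩ = 0) : ∀ t ∈ Set.Ici (0:ℝ), φ t ⟨N - 1, hN⟩ = 0 := by
  set L : Fin N := ⟨N - 1, hN⟩
  set v : ℝ → ℝ := fun t =>
    ∑ j ∈ univ.erase L, (1 / (φ t L - φ t j) + 1 / (φ t L + φ t j))
  have hderiv : ∀ t ∈ Set.Ici (0:ℝ),
      HasDerivWithinAt (fun s => φ s L ^ 2) (2 * (φ t L * v t)) (Set.Ici 0) t := by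
    intro t ht
    refine ((hode t ht L).pow 2).congr_deriv ?_
    norm_num [v]
    ring
  have hnonpos : ∀ t ∈ Set.Ici (0:ℝ), 2 * (φ t L * v t) ≤ 0 := by
    intro t ht
    rw [mul_sum]
    refine mul_nonpos_of_nonneg_of_nonpos zero_le_two (sum_nonpos fun j hj => ?_)
    have hjL : (j : ℕ) ≠ N - 1 := fun h => (mem_erase.1 hj).1 (Fin.ext h)
    exact mul_one_div_sub_add_one_div_add_nonpos (abs_lt_of_interiorD hN (hint t ht) hjL)
  have hanti : AntitoneOn (fun s => φ s L ^ 2) (Set.Ici 0) := by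
    refine antitoneOn_of_hasDerivWithinAt_nonpos (f' := fun t => 2 * (φ t L * v t))
      (convex_Ici 0) (fun t ht => (hderiv t ht).continuousWithinAt) (fun t ht => ?_)
      (fun t ht => ?_)
    · exact (hderiv t (interior_subset ht)).mono interior_subset
    · exact hnonpos t (interior_subset ht)
  intro t ht
  have hle : φ t L ^ 2 ≤ 0 := by simpa [h0] using hanti Set.self_mem_Ici ht ht
  exact pow_eq_zero_iff two_ne_zero |>.1 (le_antisymm hle (sq_nonneg _))

theorem sum_erase_castLE {M : Type*} [AddCommMonoid M] {N : ℕ} (hN : N - 1 < N)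
    (i : Fin (N - 1)) (f : Fin N → M) :
    ∑ j ∈ univ.erase (Fin.castLE (Nat.sub_le N 1) i), f j
      = f ⟨N - 1, hN⟩ + ∑ j ∈ univ.erase i, f (Fin.castLE (Nat.sub_le N 1) j) := by
  have hset : univ.erase (Fin.castLE (Nat.sub_le N 1) i)
      = insert ⟨N - 1, hN⟩ ((univ.erase i).map (Fin.castLEEmb (Nat.sub_le N 1))) := by
    ext k
    simp only [mem_erase, mem_univ, and_true, mem_insert, mem_map, Fin.castLEEmb_apply,
      ne_eq, Fin.ext_iff, Fin.val_castLE]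
    constructor
    · intro hk
      by_cases hkL : (k : ℕ) = N - 1
      · exact Or.inl hkL
      · exact Or.inr ⟨⟨k, by omega⟩, hk, rfl⟩
    · rintro (hk | ⟨j, hji, hjk⟩) <;> omega
  have hnotin : (⟨N - 1, hN⟩ : Fin N) ∉ (univ.erase i).map (Fin.castLEEmb (Nat.sub_le N 1)) := by
    simp only [mem_map, mem_erase, mem_univ, and_true, Fin.castLEEmb_apply, ne_eq, Fin.ext_iff,
      Fin.val_castLE, not_exists, not_and]
    omega
  rw [hset, sum_insert hnotin, sum_map]
  rfl

theorem sum_erase_castLE_of_last_eq_zero {N : ℕ} (hN : N - 1 < N) {y : Fin N → ℝ}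
    (hy : y ⟨N - 1, hN⟩ = 0) (i : Fin (N - 1)) :
    ∑ j ∈ univ.erase (Fin.castLE (Nat.sub_le N 1) i),
        (1 / (y (Fin.castLE (Nat.sub_le N 1) i) - y j)
          + 1 / (y (Fin.castLE (Nat.sub_le N 1) i) + y j))
      = ∑ j ∈ univ.erase i,
          (1 / (y (Fin.castLE (Nat.sub_le N 1) i) - y (Fin.castLE (Nat.sub_le N 1) j))
            + 1 / (y (Fin.castLE (Nat.sub_le N 1) i) + y (Fin.castLE (Nat.sub_le N 1) j)))
        + 2 / y (Fin.castLE (Nat.sub_le N 1) i) := by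
  rw [sum_erase_castLE hN, hy, add_comm, sub_zero, add_zero, ← add_div, one_add_one_eq_two]

theorem statement16 (N : ℕ) (hN : 2 ≤ N) (x : Fin N → ℝ)
    (hxN : x ⟨N - 1, by omega⟩ = 0)
    (φ : ℝ → Fin N → ℝ) (hφ0 : φ 0 = x)
    (hint : ∀ t ∈ Set.Ici (0:ℝ), interiorD (φ t))
    (hode : solvesD φ) :
    (∀ t ∈ Set.Ici (0:ℝ), φ t ⟨N - 1, by omega⟩ = 0) ∧
    (∀ t ∈ Set.Ici (0:ℝ),
      interiorB (fun i : Fin (N - 1) => φ t (Fin.castLE (Nat.sub_le N 1) i))) ∧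
    ((fun i : Fin (N - 1) => φ 0 (Fin.castLE (Nat.sub_le N 1) i))
      = fun i : Fin (N - 1) => x (Fin.castLE (Nat.sub_le N 1) i)) ∧
    solvesB 2 (fun t (i : Fin (N - 1)) => φ t (Fin.castLE (Nat.sub_le N 1) i)) := by
  have hN1 : N - 1 < N := by omega
  have hzero := last_eq_zero_of_solvesD hN1 hint hode (by rw [hφ0]; exact hxN)
  refine ⟨hzero, fun t ht => interiorB_castLE_of_interiorD (hint t ht), by rw [hφ0],
    fun t ht i => ?_⟩
  have hD := hode t ht (Fin.castLE (Nat.sub_le N 1) i)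
  rwa [sum_erase_castLE_of_last_eq_zero hN1 (hzero t ht)] at hD
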